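/- With W₀ := ind_{K∩M}^M V_{K∩N}, I₀ := j_{W₀}^{-1}(id), and 𝒮'(b) := j_{W₀}(I₀ ∘ b) for b ∈ End_{C[G]}(ind_K^G V), the following hold: (i) 𝒮' : End_{C[G]}(ind_K^G V) → End_{C[M]}(ind_{K∩M}^M V_{K∩N}) is a homomorphism of unital C-algebras, and I₀ ∘ b = Ind_P^G(𝒮'(b)) ∘ I₀ for all b, where Ind_P^G(a) acts on Ind_P^G W₀ by post-composing functions with a; (ii) for every C[M]-module W and every α ∈ Hom_{C[M]}(ind_{K∩M}^M V_{K∩N}, W), one has j_W(Ind_P^G(α) ∘ I₀) = α; (iii) for every b ∈ End_{C[G]}(ind_K^G V) and every I ∈ Hom_{C[G]}(ind_K^G V, Ind_P^G W), one has j_W(I ∘ b) = j_W(I) ∘ 𝒮'(b). -/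

import Mathlib

/-!
Everything rests on one factorisation. Since `G = P K`, an intertwiner
`I : ind_K^G V → Ind_P^G W` satisfies `(I [1,v])(p k) = τ(p) (I [1, k v])(1)`, so it is
determined by `v ↦ (I [1,v])(1)`; comparing with `I₀` on the generators `[1,v]` gives
`I = Ind_P^G(j_W(I)) ∘ I₀`. Evaluating `I ∘ b = Ind_P^G(j_W(I)) ∘ I₀ ∘ b` at `[1,v]` and `1` gives
`j_W(I ∘ b) = j_W(I) ∘ 𝒮'(b)`, multiplicativity of `𝒮'` is the case `W = W₀`, and the remaining
identities follow because an `M`-map out of `ind_{K∩M}^M V_{K∩N}` is determined by its values on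
the `[1, v̄]`. That `𝒮'(b)` exists at all is Frobenius reciprocity for `ind_{K∩M}^M`.
-/

open scoped Classical

noncomputable section
namespace Paper

variable {C : Type} [Field C] {G : Type} [Group G]

/-- The compactly induced module `ind_K^G V`, as a `C`-submodule of `G → V`. -/
def cInd (K : Subgroup G) {V : Type} [AddCommGroup V] [Module C V]
    (ρ : Representation C ↥K V) : Submodule C (G → V) where
  carrier := {f | (∀ (k : ↥K) (x : G), f (↑k * x) = ρ k (f x)) ∧
    ∃ S : Finset G, ∀ x : G, f x ≠ 0 → ∃ s ∈ S, ∃ k ∈ K, x = k * s}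
  add_mem' := by
    rintro a b ⟨ha1, Sa, ha2⟩ ⟨hb1, Sb, hb2⟩
    refine ⟨fun k x => by simp [ha1 k x, hb1 k x], Sa ∪ Sb, fun x hx => ?_⟩
    by_cases h : a x ≠ 0
    · obtain ⟨s, hs, k, hk, h'⟩ := ha2 x h
      exact ⟨s, Finset.mem_union_left _ hs, k, hk, h'⟩
    · push_neg at h
      have hbx : b x ≠ 0 := by
        intro hb0; apply hx; simp only [Pi.add_apply, h, hb0, add_zero]
      obtain ⟨s, hs, k, hk, h'⟩ := hb2 x hbx
      exact ⟨s, Finset.mem_union_right _ hs, k, hk, h'⟩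
  zero_mem' := ⟨fun k x => by simp, ∅, fun x hx => absurd rfl hx⟩
  smul_mem' := by
    rintro c a ⟨ha1, Sa, ha2⟩
    refine ⟨fun k x => by simp [ha1 k x], Sa, fun x hx => ?_⟩
    refine ha2 x (fun h0 => hx ?_)
    simp only [Pi.smul_apply, h0, smul_zero]

/-- The (full) induced module `Ind_P^G W`, as a `C`-submodule of `G → W`. -/
def fInd (P : Subgroup G) {W : Type} [AddCommGroup W] [Module C W]
    (τ : Representation C ↥P W) : Submodule C (G → W) where
  carrier := {f | ∀ (p : ↥P) (x : G), f (↑p * x) = τ p (f x)}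
  add_mem' := by intro a b ha hb p x; simp [ha p x, hb p x]
  zero_mem' := by intro p x; simp
  smul_mem' := by intro c a ha p x; simp [ha p x]

/-- Right translation action of `G` on `ind_K^G V`. -/
def cIndRep (K : Subgroup G) {V : Type} [AddCommGroup V] [Module C V]
    (ρ : Representation C ↥K V) : Representation C G ↥(cInd K ρ) where
  toFun g :=
    { toFun := fun f => ⟨fun x => (f : G → V) (x * g), by
        refine ⟨fun k x => ?_, ?_⟩
        · show (f : G → V) ((↑k * x) * g) = ρ k ((f : G → V) (x * g))
          rw [mul_assoc]; exact f.2.1 k (x * g)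
        · obtain ⟨S, hS⟩ := f.2.2
          refine ⟨S.image (· * g⁻¹), fun x hx => ?_⟩
          obtain ⟨s, hs, k, hk, h'⟩ := hS (x * g) hx
          refine ⟨s * g⁻¹, Finset.mem_image_of_mem _ hs, k, hk, ?_⟩
          rw [← mul_assoc, ← h', mul_assoc, mul_inv_cancel, mul_one]⟩
      map_add' := fun a b => rfl
      map_smul' := fun c a => rfl }
  map_one' := by ext f x; simp
  map_mul' := fun a b => by ext f x; simp [mul_assoc]

/-- Right translation action of `G` on `Ind_P^G W`. -/
def fIndRep (P : Subgroup G) {W : Type} [AddCommGroup W] [Module C W]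
    (τ : Representation C ↥P W) : Representation C G ↥(fInd P τ) where
  toFun g :=
    { toFun := fun f => ⟨fun x => (f : G → W) (x * g), by
        intro p x
        show (f : G → W) ((↑p * x) * g) = τ p ((f : G → W) (x * g))
        rw [mul_assoc]; exact f.2 p (x * g)⟩
      map_add' := fun a b => rfl
      map_smul' := fun c a => rfl }
  map_one' := by ext f x; simp
  map_mul' := fun a b => by ext f x; simp [mul_assoc]

/-- Equivariant `C`-linear maps between two representations of a monoid `Γ`. -/
def equivHom {Γ : Type} [Monoid Γ] {X Y : Type} [AddCommGroup X] [Module C X]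
    [AddCommGroup Y] [Module C Y] (σ : Representation C Γ X) (τ : Representation C Γ Y) :
    Submodule C (X →ₗ[C] Y) where
  carrier := {φ | ∀ γ : Γ, φ ∘ₗ σ γ = τ γ ∘ₗ φ}
  add_mem' := by
    intro a b ha hb γ; ext x
    have h1 := LinearMap.congr_fun (ha γ) x
    have h2 := LinearMap.congr_fun (hb γ) x
    simp only [LinearMap.comp_apply] at h1 h2 ⊢
    simp [h1, h2]
  zero_mem' := by intro γ; ext x; simp
  smul_mem' := by
    intro c a ha γ; ext x
    have h1 := LinearMap.congr_fun (ha γ) x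
    simp only [LinearMap.comp_apply] at h1 ⊢
    simp [h1]

/-- The element `[1,v]` of `ind_K^G V` : the function supported on `K` with value `v` at `1`. -/
def unitFn (K : Subgroup G) {V : Type} [AddCommGroup V] [Module C V]
    (ρ : Representation C ↥K V) (v : V) : G → V :=
  fun g => if h : g ∈ K then ρ ⟨g, h⟩ v else 0

lemma unitFn_mem (K : Subgroup G) {V : Type} [AddCommGroup V] [Module C V]
    (ρ : Representation C ↥K V) (v : V) : unitFn K ρ v ∈ cInd K ρ := by
  constructor
  · intro k x
    by_cases hx : x ∈ K
    · have hkx : (↑k * x) ∈ K := mul_mem k.2 hx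
      simp only [unitFn, dif_pos hx, dif_pos hkx]
      have : (⟨↑k * x, hkx⟩ : ↥K) = k * ⟨x, hx⟩ := rfl
      rw [this, map_mul]; rfl
    · have hkx : (↑k * x) ∉ K := by
        intro h
        exact hx (by simpa using mul_mem (inv_mem k.2) h)
      simp [unitFn, dif_neg hx, dif_neg hkx]
  · refine ⟨{1}, fun x hx => ⟨1, Finset.mem_singleton_self 1, x, ?_, (mul_one x).symm⟩⟩
    by_contra hxK
    exact hx (by simp [unitFn, dif_neg hxK])

/-- `[1,v]` as an element of the submodule. -/
def unitElt (K : Subgroup G) {V : Type} [AddCommGroup V] [Module C V]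
    (ρ : Representation C ↥K V) (v : V) : ↥(cInd K ρ) :=
  ⟨unitFn K ρ v, unitFn_mem K ρ v⟩

/-- The subspace of `V` spanned by the elements `ρ(n)v - v`, `n ∈ K ⊓ N`. -/
def coinvKer (K N : Subgroup G) {V : Type} [AddCommGroup V] [Module C V]
    (ρ : Representation C ↥K V) : Submodule C V :=
  Submodule.span C {x | ∃ (n : G) (hn : n ∈ K ⊓ N) (v : V), x = ρ ⟨n, hn.1⟩ v - v}

/-- The representation of `K ⊓ M` on the coinvariants `V_{K ⊓ N}`. -/
def coinvRep (K M N : Subgroup G) {V : Type} [AddCommGroup V] [Module C V]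
    (ρ : Representation C ↥K V)
    (hnorm : ∀ (m : ↥(K ⊓ M)) (n : G), n ∈ K ⊓ N → ↑m * n * (↑m)⁻¹ ∈ K ⊓ N) :
    Representation C ↥(K ⊓ M) (V ⧸ coinvKer K N ρ) where
  toFun m := Submodule.mapQ _ _ (ρ ⟨↑m, m.2.1⟩) (by
    rw [coinvKer, Submodule.span_le]
    rintro x ⟨n, hn, v, rfl⟩
    refine Submodule.mem_comap.mpr ?_
    have key : ρ ⟨↑m, m.2.1⟩ (ρ ⟨n, hn.1⟩ v - v)
        = ρ ⟨↑m * n * (↑m)⁻¹, (hnorm m n hn).1⟩ (ρ ⟨↑m, m.2.1⟩ v) - ρ ⟨↑m, m.2.1⟩ v := by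
      rw [map_sub]
      congr 1
      have h2 : (⟨↑m * n * (↑m)⁻¹, (hnorm m n hn).1⟩ : ↥K) * ⟨↑m, m.2.1⟩
          = ⟨↑m, m.2.1⟩ * ⟨n, hn.1⟩ := by
        ext; simp [mul_assoc]
      calc ρ ⟨↑m, m.2.1⟩ (ρ ⟨n, hn.1⟩ v) = (ρ (⟨↑m, m.2.1⟩ * ⟨n, hn.1⟩)) v := by
            rw [map_mul]; rfl
        _ = ρ (⟨↑m * n * (↑m)⁻¹, (hnorm m n hn).1⟩ * ⟨↑m, m.2.1⟩) v := by rw [h2]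
        _ = _ := by rw [map_mul]; rfl
    rw [key]
    exact Submodule.subset_span ⟨↑m * n * (↑m)⁻¹, hnorm m n hn, ρ ⟨↑m, m.2.1⟩ v, rfl⟩)
  map_one' := by
    refine LinearMap.ext fun x => ?_
    obtain ⟨v, rfl⟩ := Submodule.Quotient.mk_surjective _ x
    rw [Submodule.mapQ_apply]
    have h1 : (⟨((1 : ↥(K ⊓ M)) : G), (1 : ↥(K ⊓ M)).2.1⟩ : ↥K) = 1 := by ext; rfl
    rw [h1, map_one]
    rfl
  map_mul' := by
    intro a b
    refine LinearMap.ext fun x => ?_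
    obtain ⟨v, rfl⟩ := Submodule.Quotient.mk_surjective _ x
    have h1 : (⟨((a * b : ↥(K ⊓ M)) : G), (a * b).2.1⟩ : ↥K)
        = ⟨↑a, a.2.1⟩ * ⟨↑b, b.2.1⟩ := by ext; rfl
    simp only [Submodule.mapQ_apply, Module.End.mul_apply, h1, map_mul]

/-- The inclusion of `(K ⊓ M).subgroupOf M` into `K ⊓ M`. -/
def toKM (K M : Subgroup G) : ↥((K ⊓ M).subgroupOf M) →* ↥(K ⊓ M) where
  toFun x := ⟨↑↑x, x.2⟩
  map_one' := rfl
  map_mul' _ _ := rfl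

def rhoBar (K M N : Subgroup G) {V : Type} [AddCommGroup V] [Module C V]
    (ρ : Representation C ↥K V)
    (hnorm : ∀ (m : ↥(K ⊓ M)) (n : G), n ∈ K ⊓ N → ↑m * n * (↑m)⁻¹ ∈ K ⊓ N) :
    Representation C ↥((K ⊓ M).subgroupOf M) (V ⧸ coinvKer K N ρ) :=
  (coinvRep K M N ρ hnorm).comp (toKM K M)

def cIndBar (K M N : Subgroup G) {V : Type} [AddCommGroup V] [Module C V]
    (ρ : Representation C ↥K V)
    (hnorm : ∀ (m : ↥(K ⊓ M)) (n : G), n ∈ K ⊓ N → ↑m * n * (↑m)⁻¹ ∈ K ⊓ N) :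
    Submodule C (↥M → V ⧸ coinvKer K N ρ) :=
  cInd ((K ⊓ M).subgroupOf M) (rhoBar K M N ρ hnorm)

def tauM {P M : Subgroup G} (hMP : M ≤ P) {W : Type} [AddCommGroup W] [Module C W]
    (τP : Representation C ↥P W) : Representation C ↥M W :=
  τP.comp (Subgroup.inclusion hMP)

/-- The space `Hom_{C[G]}(ind_K^G V, Ind_P^G W)` of intertwiners. -/
def HomG (K P : Subgroup G) {V W : Type} [AddCommGroup V] [Module C V]
    [AddCommGroup W] [Module C W]
    (ρ : Representation C ↥K V) (τP : Representation C ↥P W) :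
    Submodule C (↥(cInd K ρ) →ₗ[C] ↥(fInd P τP)) :=
  equivHom (cIndRep K ρ) (fIndRep P τP)

/-- The space `Hom_{C[M]}(ind_{K∩M}^M V_{K∩N}, W)`. -/
def HomBar (K P M N : Subgroup G) (hMP : M ≤ P) {V W : Type} [AddCommGroup V] [Module C V]
    [AddCommGroup W] [Module C W] (ρ : Representation C ↥K V)
    (hnorm : ∀ (m : ↥(K ⊓ M)) (n' : G), n' ∈ K ⊓ N → ↑m * n' * (↑m)⁻¹ ∈ K ⊓ N)
    (τP : Representation C ↥P W) :
    Submodule C (↥(cIndBar K M N ρ hnorm) →ₗ[C] W) :=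
  equivHom (cIndRep ((K ⊓ M).subgroupOf M) (rhoBar K M N ρ hnorm)) (tauM hMP τP)

/-- The element `[1, v̄]` of `ind_{K∩M}^M V_{K∩N}`. -/
def unitBar (K M N : Subgroup G) {V : Type} [AddCommGroup V] [Module C V]
    (ρ : Representation C ↥K V)
    (hnorm : ∀ (m : ↥(K ⊓ M)) (n' : G), n' ∈ K ⊓ N → ↑m * n' * (↑m)⁻¹ ∈ K ⊓ N)
    (v : V) : ↥(cIndBar K M N ρ hnorm) :=
  unitElt ((K ⊓ M).subgroupOf M) (rhoBar K M N ρ hnorm) (Submodule.Quotient.mk v)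

/-- The characterizing property of `j` : `j(I) = u` iff `u([1,v̄]) = (I [1,v])(1)`
for all `v ∈ V`. -/
def charJ (K P M N : Subgroup G) {V W : Type} [AddCommGroup V] [Module C V]
    [AddCommGroup W] [Module C W] (ρ : Representation C ↥K V)
    (hnorm : ∀ (m : ↥(K ⊓ M)) (n' : G), n' ∈ K ⊓ N → ↑m * n' * (↑m)⁻¹ ∈ K ⊓ N)
    (τP : Representation C ↥P W)
    (I : ↥(cInd K ρ) →ₗ[C] ↥(fInd P τP)) (u : ↥(cIndBar K M N ρ hnorm) →ₗ[C] W) : Prop :=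
  ∀ v : V, u (unitBar K M N ρ hnorm v) = (↑(I (unitElt K ρ v)) : G → W) 1


/-- `End_{C[G]}(ind_K^G V)`. -/
def EndG (K : Subgroup G) {V : Type} [AddCommGroup V] [Module C V]
    (ρ : Representation C ↥K V) :
    Submodule C (↥(cInd K ρ) →ₗ[C] ↥(cInd K ρ)) :=
  equivHom (cIndRep K ρ) (cIndRep K ρ)

/-- `End_{C[M]}(ind_{K∩M}^M V_{K∩N})`. -/
def EndBar (K M N : Subgroup G) {V : Type} [AddCommGroup V] [Module C V]
    (ρ : Representation C ↥K V)
    (hnorm : ∀ (m : ↥(K ⊓ M)) (n' : G), n' ∈ K ⊓ N → ↑m * n' * (↑m)⁻¹ ∈ K ⊓ N) :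
    Submodule C (↥(cIndBar K M N ρ hnorm) →ₗ[C] ↥(cIndBar K M N ρ hnorm)) :=
  equivHom (cIndRep ((K ⊓ M).subgroupOf M) (rhoBar K M N ρ hnorm))
    (cIndRep ((K ⊓ M).subgroupOf M) (rhoBar K M N ρ hnorm))

section Equivariant

variable {Γ : Type} [Monoid Γ] {X Y Z : Type} [AddCommGroup X] [Module C X]
  [AddCommGroup Y] [Module C Y] [AddCommGroup Z] [Module C Z]
  {σ : Representation C Γ X} {τ : Representation C Γ Y} {υ : Representation C Γ Z}

lemma mem_equivHom_iff {φ : X →ₗ[C] Y} :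
    φ ∈ equivHom σ τ ↔ ∀ (γ : Γ) (x : X), φ (σ γ x) = τ γ (φ x) :=
  ⟨fun h γ x => LinearMap.congr_fun (h γ) x, fun h γ => LinearMap.ext (h γ)⟩

lemma id_mem_equivHom : LinearMap.id ∈ equivHom σ σ := fun _ => rfl

lemma equivHom_comp {ψ : Y →ₗ[C] Z} {φ : X →ₗ[C] Y} (hψ : ψ ∈ equivHom τ υ)
    (hφ : φ ∈ equivHom σ τ) : ψ ∘ₗ φ ∈ equivHom σ υ := fun γ => by
  rw [LinearMap.comp_assoc, hφ γ, ← LinearMap.comp_assoc, hψ γ, LinearMap.comp_assoc]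

end Equivariant

section CompactInduction

variable {Γ : Type} [Group Γ] (H : Subgroup Γ) {X : Type} [AddCommGroup X] [Module C X]
  (σ : Representation C ↥H X)

lemma cIndRep_apply (g : Γ) (f : ↥(cInd H σ)) (y : Γ) :
    (↑(cIndRep H σ g f) : Γ → X) y = (↑f : Γ → X) (y * g) := rfl

lemma unitElt_apply (x : X) (g : Γ) :
    (↑(unitElt H σ x) : Γ → X) g = if h : g ∈ H then σ ⟨g, h⟩ x else 0 := rfl

lemma unitElt_apply_one (x : X) : (↑(unitElt H σ x) : Γ → X) 1 = x := by
  rw [unitElt_apply, dif_pos (one_mem H)]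
  show σ 1 x = x
  rw [map_one, Module.End.one_apply]

def unitEltLinear : X →ₗ[C] ↥(cInd H σ) where
  toFun := unitElt H σ
  map_add' x y := Subtype.ext <| funext fun g => by
    show unitFn H σ (x + y) g = unitFn H σ x g + unitFn H σ y g
    unfold unitFn; split <;> simp
  map_smul' c x := Subtype.ext <| funext fun g => by
    show unitFn H σ (c • x) g = c • unitFn H σ x g
    unfold unitFn; split <;> simp

lemma cIndRep_unitElt (k : ↥H) (x : X) :
    cIndRep H σ ↑k (unitElt H σ x) = unitElt H σ (σ k x) := by
  refine Subtype.ext <| funext fun g => ?_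
  rw [cIndRep_apply, unitElt_apply, unitElt_apply]
  by_cases h : g ∈ H
  · rw [dif_pos (mul_mem h k.2), dif_pos h]
    show σ (⟨g, h⟩ * k) x = _
    rw [map_mul, Module.End.mul_apply]
  · rw [dif_neg h, dif_neg fun hm => h (by simpa using mul_mem hm (inv_mem k.2))]

lemma cIndRep_unitElt_apply (g y : Γ) (x : X) :
    (↑(cIndRep H σ g (unitElt H σ x)) : Γ → X) y
      = if h : y * g ∈ H then σ ⟨y * g, h⟩ x else 0 := rfl

lemma cInd_apply_of_mul_inv_mem (f : ↥(cInd H σ)) {y a : Γ} (h : y * a⁻¹ ∈ H) :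
    (↑f : Γ → X) y = σ ⟨y * a⁻¹, h⟩ ((↑f : Γ → X) a) := by
  simpa using f.2.1 ⟨y * a⁻¹, h⟩ a

/-- Induction on a finite set of cosets covering the support: subtracting the translate
`a⁻¹ · [1, f a]` kills `f` on `H a` without changing it elsewhere. -/
lemma span_range_cIndRep_unitElt :
    Submodule.span C (Set.range fun p : Γ × X => cIndRep H σ p.1 (unitElt H σ p.2)) = ⊤ := by
  set T := Set.range fun p : Γ × X => cIndRep H σ p.1 (unitElt H σ p.2)
  rw [eq_top_iff]
  rintro f -
  obtain ⟨S, hS⟩ := f.2.2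
  induction S using Finset.induction_on generalizing f with
  | empty =>
    have hf : f = 0 := Subtype.ext <| funext fun y =>
      by_contra fun hy => by simpa using hS y hy
    exact hf ▸ zero_mem _
  | @insert a S _ ih =>
    set e := cIndRep H σ a⁻¹ (unitElt H σ ((f : Γ → X) a))
    have he : e ∈ Submodule.span C T :=
      Submodule.subset_span ⟨(a⁻¹, (f : Γ → X) a), rfl⟩
    suffices hfe : f - e ∈ Submodule.span C T by simpa using add_mem hfe he
    refine ih fun y hy => ?_
    rw [Submodule.coe_sub, Pi.sub_apply, cIndRep_unitElt_apply] at hy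
    by_cases h : y * a⁻¹ ∈ H
    · rw [dif_pos h, ← cInd_apply_of_mul_inv_mem, sub_self] at hy
      exact (hy rfl).elim
    · rw [dif_neg h, sub_zero] at hy
      obtain ⟨s, hs, k, hk, rfl⟩ := hS y hy
      refine ⟨s, (Finset.mem_insert.mp hs).resolve_left ?_, k, hk, rfl⟩
      rintro rfl
      exact h (by simpa using hk)

lemma equivHom_ext {Y : Type} [AddCommGroup Y] [Module C Y] {τ : Representation C Γ Y}
    {u u' : ↥(cInd H σ) →ₗ[C] Y} (hu : u ∈ equivHom (cIndRep H σ) τ)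
    (hu' : u' ∈ equivHom (cIndRep H σ) τ)
    (h : ∀ x, u (unitElt H σ x) = u' (unitElt H σ x)) : u = u' :=
  LinearMap.ext_on_range (span_range_cIndRep_unitElt H σ) fun p => by
    simp only [mem_equivHom_iff.mp hu, mem_equivHom_iff.mp hu', h]

end CompactInduction

section FullInduction

variable {Γ : Type} [Group Γ] {P : Subgroup Γ} {X Y : Type} [AddCommGroup X] [Module C X]
  [AddCommGroup Y] [Module C Y] {σ : Representation C ↥P X} {τ : Representation C ↥P Y}

/-- `Ind_P^Γ(α)`. -/
def fIndMap (α : X →ₗ[C] Y) (hα : ∀ (p : ↥P) (x : X), α (σ p x) = τ p (α x)) :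
    ↥(fInd P σ) →ₗ[C] ↥(fInd P τ) where
  toFun f := ⟨α ∘ (f : Γ → X), fun p y => by simp [f.2 p y, hα]⟩
  map_add' f f' := Subtype.ext <| funext fun _ => map_add α _ _
  map_smul' c f := Subtype.ext <| funext fun _ => map_smul α c _

lemma fIndMap_apply (α : X →ₗ[C] Y) (hα : ∀ (p : ↥P) (x : X), α (σ p x) = τ p (α x))
    (f : ↥(fInd P σ)) (y : Γ) :
    (↑(fIndMap α hα f) : Γ → Y) y = α ((↑f : Γ → X) y) := rfl

lemma fIndMap_mem (α : X →ₗ[C] Y) (hα : ∀ (p : ↥P) (x : X), α (σ p x) = τ p (α x)) :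
    fIndMap α hα ∈ equivHom (fIndRep P σ) (fIndRep P τ) := fun _ => rfl

end FullInduction

section Frobenius

variable {Γ : Type} [Group Γ] (H : Subgroup Γ) {X : Type} [AddCommGroup X] [Module C X]
  (σ : Representation C ↥H X) {Y : Type} [AddCommGroup Y] [Module C Y]
  (τ : Representation C Γ Y) (φ : X →ₗ[C] Y)
  (hφ : ∀ (h : ↥H) (x : X), φ (σ h x) = τ ↑h (φ x))

def frobeniusSummand (f : ↥(cInd H σ)) : Quotient (QuotientGroup.rightRel H) → Y :=
  Quotient.lift (fun g => τ g⁻¹ (φ ((f : Γ → X) g))) fun x y hxy => by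
    have hyx : y * x⁻¹ ∈ H := QuotientGroup.rightRel_apply.mp hxy
    show τ x⁻¹ (φ ((f : Γ → X) x)) = τ y⁻¹ (φ ((f : Γ → X) y))
    rw [cInd_apply_of_mul_inv_mem H σ f hyx, hφ, ← Module.End.mul_apply, ← map_mul]
    congr 2
    group

lemma frobeniusSummand_mk (f : ↥(cInd H σ)) (g : Γ) :
    frobeniusSummand H σ τ φ hφ f ⟦g⟧ = τ g⁻¹ (φ ((f : Γ → X) g)) := rfl

lemma frobeniusSummand_support_finite (f : ↥(cInd H σ)) :
    (Function.support (frobeniusSummand H σ τ φ hφ f)).Finite := by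
  obtain ⟨S, hS⟩ := f.2.2
  refine (S.finite_toSet.image fun s => (⟦s⟧ : Quotient (QuotientGroup.rightRel H))).subset ?_
  rintro ⟨g⟩ hg
  have hfg : (f : Γ → X) g ≠ 0 := fun h0 => hg (by
    show τ g⁻¹ (φ ((f : Γ → X) g)) = 0
    rw [h0, map_zero, map_zero])
  obtain ⟨s, hs, k, hk, rfl⟩ := hS g hfg
  exact ⟨s, hs, Quotient.sound (QuotientGroup.rightRel_apply.mpr (by simpa using hk))⟩

def frobeniusLift : ↥(cInd H σ) →ₗ[C] Y where
  toFun f := ∑ᶠ c, frobeniusSummand H σ τ φ hφ f c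
  map_add' f f' := by
    rw [← finsum_add_distrib (frobeniusSummand_support_finite H σ τ φ hφ f)
      (frobeniusSummand_support_finite H σ τ φ hφ f')]
    refine finsum_congr fun c => Quotient.inductionOn c fun g => ?_
    simp only [frobeniusSummand_mk, Submodule.coe_add, Pi.add_apply, map_add]
  map_smul' c f := by
    rw [RingHom.id_apply, smul_finsum' c (frobeniusSummand_support_finite H σ τ φ hφ f)]
    refine finsum_congr fun c' => Quotient.inductionOn c' fun g => ?_
    simp only [frobeniusSummand_mk, Submodule.coe_smul, Pi.smul_apply, map_smul]

lemma frobeniusLift_cIndRep_unitElt (g : Γ) (x : X) :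
    frobeniusLift H σ τ φ hφ (cIndRep H σ g (unitElt H σ x)) = τ g (φ x) := by
  show ∑ᶠ c, frobeniusSummand H σ τ φ hφ _ c = _
  rw [finsum_eq_single _ ⟦g⁻¹⟧]
  · rw [frobeniusSummand_mk, inv_inv, cIndRep_apply, inv_mul_cancel, unitElt_apply_one]
  · refine fun c => Quotient.inductionOn c fun y hy => ?_
    rw [frobeniusSummand_mk, cIndRep_unitElt_apply, dif_neg, map_zero, map_zero]
    exact fun h => hy (Quotient.sound (QuotientGroup.rightRel_apply.mpr (by simpa using inv_mem h)))

lemma frobeniusLift_unitElt (x : X) : frobeniusLift H σ τ φ hφ (unitElt H σ x) = φ x := by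
  simpa using frobeniusLift_cIndRep_unitElt H σ τ φ hφ 1 x

lemma frobeniusLift_mem : frobeniusLift H σ τ φ hφ ∈ equivHom (cIndRep H σ) τ := fun γ =>
  LinearMap.ext_on_range (span_range_cIndRep_unitElt H σ) fun p => by
    rw [LinearMap.comp_apply, LinearMap.comp_apply, ← Module.End.mul_apply, ← map_mul,
      frobeniusLift_cIndRep_unitElt, frobeniusLift_cIndRep_unitElt, map_mul, Module.End.mul_apply]

end Frobenius

section Setting

variable {V : Type} [AddCommGroup V] [Module C V] {K P M N : Subgroup G}
  {ρ : Representation C ↥K V}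
  {hnorm : ∀ (m : ↥(K ⊓ M)) (n' : G), n' ∈ K ⊓ N → ↑m * n' * (↑m)⁻¹ ∈ K ⊓ N}
  {W : Type} [AddCommGroup W] [Module C W] {τ : Representation C ↥P W}

lemma apply_unitElt_rho_one {J : ↥(cInd K ρ) →ₗ[C] ↥(fInd P τ)}
    (hJ : J ∈ HomG K P ρ τ) (k : ↥K) (v : V) :
    (↑(J (unitElt K ρ (ρ k v))) : G → W) 1 = (↑(J (unitElt K ρ v)) : G → W) ↑k := by
  rw [← cIndRep_unitElt, mem_equivHom_iff.mp hJ]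
  show (↑(J (unitElt K ρ v)) : G → W) (1 * ↑k) = _
  rw [one_mul]

lemma apply_unitElt_mul {J : ↥(cInd K ρ) →ₗ[C] ↥(fInd P τ)} (hJ : J ∈ HomG K P ρ τ)
    (v : V) (p : ↥P) (k : ↥K) :
    (↑(J (unitElt K ρ v)) : G → W) (↑p * ↑k)
      = τ p ((↑(J (unitElt K ρ (ρ k v))) : G → W) 1) := by
  rw [apply_unitElt_rho_one hJ]
  exact (J (unitElt K ρ v)).2 p k

/-- `v ↦ (J [1,v])(1)` factors through `V_{K∩N}` because `τ` is trivial on `N`, and Frobenius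
reciprocity for `ind_{K∩M}^M` extends it to `j_W(J)`. -/
lemma exists_charJ (hMP : M ≤ P) (hNP : N ≤ P) (hτN : ∀ x : ↥P, (x : G) ∈ N → τ x = 1)
    {J : ↥(cInd K ρ) →ₗ[C] ↥(fInd P τ)} (hJ : J ∈ HomG K P ρ τ) :
    ∃ w ∈ HomBar K P M N hMP ρ hnorm τ, charJ K P M N ρ hnorm τ J w := by
  let φ : V →ₗ[C] W :=
    (LinearMap.proj 1 ∘ₗ (fInd P τ).subtype) ∘ₗ J ∘ₗ unitEltLinear K ρ
  have hφ : ∀ (k : ↥K) (v : V), φ (ρ k v) = (↑(J (unitElt K ρ v)) : G → W) ↑k :=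
    apply_unitElt_rho_one hJ
  have hφ_one : ∀ v : V, φ v = (↑(J (unitElt K ρ v)) : G → W) 1 := fun _ => rfl
  have hker : coinvKer K N ρ ≤ LinearMap.ker φ := by
    refine Submodule.span_le.mpr ?_
    rintro _ ⟨n, hn, v, rfl⟩
    rw [SetLike.mem_coe, LinearMap.mem_ker, map_sub, hφ, sub_eq_zero]
    simpa [hφ_one, hτN ⟨n, hNP hn.2⟩ hn.2] using (J (unitElt K ρ v)).2 ⟨n, hNP hn.2⟩ 1
  let φbar := (coinvKer K N ρ).liftQ φ hker
  have hφbar : ∀ (h : ↥((K ⊓ M).subgroupOf M)) (x : V ⧸ coinvKer K N ρ),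
      φbar (rhoBar K M N ρ hnorm h x) = tauM hMP τ ↑h (φbar x) := by
    intro h x
    induction x using Submodule.Quotient.induction_on with | H v => ?_
    show φ (ρ ⟨_, h.2.1⟩ v) = τ ⟨_, hMP h.1.2⟩ (φ v)
    rw [hφ, hφ_one]
    simpa using (J (unitElt K ρ v)).2 ⟨_, hMP h.1.2⟩ 1
  exact ⟨frobeniusLift _ _ _ φbar hφbar, frobeniusLift_mem _ _ _ _ _,
    fun v => frobeniusLift_unitElt _ _ _ _ _ _⟩

lemma HomBar_ext (hMP : M ≤ P) {w w' : ↥(cIndBar K M N ρ hnorm) →ₗ[C] W}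
    (hw : w ∈ HomBar K P M N hMP ρ hnorm τ) (hw' : w' ∈ HomBar K P M N hMP ρ hnorm τ)
    (h : ∀ v : V, w (unitBar K M N ρ hnorm v) = w' (unitBar K M N ρ hnorm v)) : w = w' :=
  equivHom_ext _ _ hw hw' fun x => Submodule.Quotient.induction_on _ x h

lemma charJ_unique (hMP : M ≤ P) {J : ↥(cInd K ρ) →ₗ[C] ↥(fInd P τ)}
    {w w' : ↥(cIndBar K M N ρ hnorm) →ₗ[C] W}
    (hw : w ∈ HomBar K P M N hMP ρ hnorm τ) (hw' : w' ∈ HomBar K P M N hMP ρ hnorm τ)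
    (h : charJ K P M N ρ hnorm τ J w) (h' : charJ K P M N ρ hnorm τ J w') : w = w' :=
  HomBar_ext hMP hw hw' fun v => (h v).trans (h' v).symm

lemma charJ_add {J J' : ↥(cInd K ρ) →ₗ[C] ↥(fInd P τ)}
    {w w' : ↥(cIndBar K M N ρ hnorm) →ₗ[C] W}
    (h : charJ K P M N ρ hnorm τ J w) (h' : charJ K P M N ρ hnorm τ J' w') :
    charJ K P M N ρ hnorm τ (J + J') (w + w') := fun v => by
  simp only [LinearMap.add_apply, Submodule.coe_add, Pi.add_apply, h v, h' v]

lemma charJ_smul (c : C) {J : ↥(cInd K ρ) →ₗ[C] ↥(fInd P τ)}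
    {w : ↥(cIndBar K M N ρ hnorm) →ₗ[C] W} (h : charJ K P M N ρ hnorm τ J w) :
    charJ K P M N ρ hnorm τ (c • J) (c • w) := fun v => by
  simp only [LinearMap.smul_apply, Submodule.coe_smul, Pi.smul_apply, h v]

variable {τ₀ : Representation C ↥P ↥(cIndBar K M N ρ hnorm)}

lemma HomBar_eq_EndBar (hMP : M ≤ P) (hτ₀M : ∀ (x : ↥P) (hx : (x : G) ∈ M),
      τ₀ x = cIndRep ((K ⊓ M).subgroupOf M) (rhoBar K M N ρ hnorm) ⟨↑x, hx⟩) :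
    HomBar K P M N hMP ρ hnorm τ₀ = EndBar K M N ρ hnorm := by
  have h : tauM hMP τ₀ = cIndRep ((K ⊓ M).subgroupOf M) (rhoBar K M N ρ hnorm) :=
    MonoidHom.ext fun γ => hτ₀M ⟨γ, hMP γ.2⟩ γ.2
  rw [HomBar, EndBar, h]

/-- An `M`-equivariant map out of `W₀` is `P`-equivariant, since `P = M N` acts through `M`. -/
lemma map_tau_of_mem_HomBar (hMP : M ≤ P) (hNP : N ≤ P)
    (hPprod : ∀ p ∈ P, ∃ m ∈ M, ∃ n' ∈ N, p = m * n')
    (hτ₀N : ∀ x : ↥P, (x : G) ∈ N → τ₀ x = 1)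
    (hτ₀M : ∀ (x : ↥P) (hx : (x : G) ∈ M),
      τ₀ x = cIndRep ((K ⊓ M).subgroupOf M) (rhoBar K M N ρ hnorm) ⟨↑x, hx⟩)
    (hτN : ∀ x : ↥P, (x : G) ∈ N → τ x = 1)
    {w : ↥(cIndBar K M N ρ hnorm) →ₗ[C] W} (hw : w ∈ HomBar K P M N hMP ρ hnorm τ)
    (p : ↥P) (x : ↥(cIndBar K M N ρ hnorm)) : w (τ₀ p x) = τ p (w x) := by
  obtain ⟨m, hm, n, hn, hmn⟩ := hPprod p p.2
  obtain rfl : p = ⟨m, hMP hm⟩ * ⟨n, hNP hn⟩ := Subtype.ext hmn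
  rw [map_mul, map_mul, hτ₀N ⟨n, hNP hn⟩ hn, hτN ⟨n, hNP hn⟩ hn,
    hτ₀M ⟨m, hMP hm⟩ hm]
  exact mem_equivHom_iff.mp hw ⟨m, hm⟩ x

lemma apply_eq_of_charJ (hMP : M ≤ P) (hNP : N ≤ P)
    (hPprod : ∀ p ∈ P, ∃ m ∈ M, ∃ n' ∈ N, p = m * n')
    (hG : ∀ g : G, ∃ k ∈ K, ∃ p ∈ P, g = k * p)
    (hτ₀N : ∀ x : ↥P, (x : G) ∈ N → τ₀ x = 1)
    (hτ₀M : ∀ (x : ↥P) (hx : (x : G) ∈ M),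
      τ₀ x = cIndRep ((K ⊓ M).subgroupOf M) (rhoBar K M N ρ hnorm) ⟨↑x, hx⟩)
    {I₀ : ↥(cInd K ρ) →ₗ[C] ↥(fInd P τ₀)} (hI₀mem : I₀ ∈ HomG K P ρ τ₀)
    (hI₀ : charJ K P M N ρ hnorm τ₀ I₀ LinearMap.id)
    (hτN : ∀ x : ↥P, (x : G) ∈ N → τ x = 1)
    {I : ↥(cInd K ρ) →ₗ[C] ↥(fInd P τ)} (hI : I ∈ HomG K P ρ τ)
    {w : ↥(cIndBar K M N ρ hnorm) →ₗ[C] W} (hw : w ∈ HomBar K P M N hMP ρ hnorm τ)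
    (hc : charJ K P M N ρ hnorm τ I w) (f : ↥(cInd K ρ)) (g : G) :
    (↑(I f) : G → W) g = w ((↑(I₀ f) : G → ↥(cIndBar K M N ρ hnorm)) g) := by
  have hwP := map_tau_of_mem_HomBar hMP hNP hPprod hτ₀N hτ₀M hτN hw
  suffices hI_eq : I = fIndMap w hwP ∘ₗ I₀ by rw [hI_eq]; rfl
  refine equivHom_ext _ _ hI (equivHom_comp (fIndMap_mem w hwP) hI₀mem) fun v =>
    Subtype.ext <| funext fun g => ?_
  obtain ⟨k, hk, p, hp, hg⟩ := hG g⁻¹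
  obtain rfl : g = ((⟨p, hp⟩⁻¹ : ↥P) : G) * ((⟨k, hk⟩⁻¹ : ↥K) : G) := by
    rw [← inv_inv g, hg]; simp
  rw [LinearMap.comp_apply, fIndMap_apply, apply_unitElt_mul hI, apply_unitElt_mul hI₀mem,
    ← hc, ← hI₀, LinearMap.id_apply, hwP]

lemma charJ_comp (hMP : M ≤ P) (hNP : N ≤ P)
    (hPprod : ∀ p ∈ P, ∃ m ∈ M, ∃ n' ∈ N, p = m * n')
    (hG : ∀ g : G, ∃ k ∈ K, ∃ p ∈ P, g = k * p)
    (hτ₀N : ∀ x : ↥P, (x : G) ∈ N → τ₀ x = 1)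
    (hτ₀M : ∀ (x : ↥P) (hx : (x : G) ∈ M),
      τ₀ x = cIndRep ((K ⊓ M).subgroupOf M) (rhoBar K M N ρ hnorm) ⟨↑x, hx⟩)
    {I₀ : ↥(cInd K ρ) →ₗ[C] ↥(fInd P τ₀)} (hI₀mem : I₀ ∈ HomG K P ρ τ₀)
    (hI₀ : charJ K P M N ρ hnorm τ₀ I₀ LinearMap.id)
    (hτN : ∀ x : ↥P, (x : G) ∈ N → τ x = 1)
    {I : ↥(cInd K ρ) →ₗ[C] ↥(fInd P τ)} (hI : I ∈ HomG K P ρ τ)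
    {w : ↥(cIndBar K M N ρ hnorm) →ₗ[C] W} (hw : w ∈ HomBar K P M N hMP ρ hnorm τ)
    (hc : charJ K P M N ρ hnorm τ I w)
    {b : ↥(cInd K ρ) →ₗ[C] ↥(cInd K ρ)}
    {ub : ↥(cIndBar K M N ρ hnorm) →ₗ[C] ↥(cIndBar K M N ρ hnorm)}
    (hub : charJ K P M N ρ hnorm τ₀ (I₀ ∘ₗ b) ub) :
    charJ K P M N ρ hnorm τ (I ∘ₗ b) (w ∘ₗ ub) := fun v => by
  rw [LinearMap.comp_apply, hub v, LinearMap.comp_apply, LinearMap.comp_apply,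
    apply_eq_of_charJ hMP hNP hPprod hG hτ₀N hτ₀M hI₀mem hI₀ hτN hI hw hc]

end Setting

theorem statement2_general {V : Type} [AddCommGroup V] [Module C V]
    (K P M N : Subgroup G)
    (hMP : M ≤ P) (hNP : N ≤ P)
    (hPprod : ∀ p ∈ P, ∃ m ∈ M, ∃ n' ∈ N, p = m * n')
    (hG : ∀ g : G, ∃ k ∈ K, ∃ p ∈ P, g = k * p)
    (hnorm : ∀ (m : ↥(K ⊓ M)) (n' : G), n' ∈ K ⊓ N → ↑m * n' * (↑m)⁻¹ ∈ K ⊓ N)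
    (ρ : Representation C ↥K V)
    -- the C[P]-module structure τ₀ on W₀ = ind_{K∩M}^M V_{K∩N}
    (τ₀ : Representation C ↥P ↥(cIndBar K M N ρ hnorm))
    (hτ₀N : ∀ x : ↥P, (x : G) ∈ N → τ₀ x = 1)
    (hτ₀M : ∀ (x : ↥P) (hx : (x : G) ∈ M),
      τ₀ x = cIndRep ((K ⊓ M).subgroupOf M) (rhoBar K M N ρ hnorm) ⟨↑x, hx⟩)
    -- I₀ = j_{W₀}⁻¹(id)
    (I₀ : ↥(cInd K ρ) →ₗ[C] ↥(fInd P τ₀))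
    (hI₀mem : I₀ ∈ HomG K P ρ τ₀)
    (hI₀ : charJ K P M N ρ hnorm τ₀ I₀
      (LinearMap.id : ↥(cIndBar K M N ρ hnorm) →ₗ[C] ↥(cIndBar K M N ρ hnorm))) :
    -- (i) 𝒮' is a well-defined map into End_{C[M]} ...
    (∀ b ∈ EndG K ρ, ∃ u : ↥(cIndBar K M N ρ hnorm) →ₗ[C] ↥(cIndBar K M N ρ hnorm), u ∈ EndBar K M N ρ hnorm ∧
      charJ K P M N ρ hnorm τ₀ (I₀ ∘ₗ b) u) ∧
    (∀ b ∈ EndG K ρ, ∀ u : ↥(cIndBar K M N ρ hnorm) →ₗ[C] ↥(cIndBar K M N ρ hnorm), u ∈ EndBar K M N ρ hnorm → ∀ u' : ↥(cIndBar K M N ρ hnorm) →ₗ[C] ↥(cIndBar K M N ρ hnorm), u' ∈ EndBar K M N ρ hnorm →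
      charJ K P M N ρ hnorm τ₀ (I₀ ∘ₗ b) u → charJ K P M N ρ hnorm τ₀ (I₀ ∘ₗ b) u' →
      u = u') ∧
    -- ... which is unital ...
    (∀ u : ↥(cIndBar K M N ρ hnorm) →ₗ[C] ↥(cIndBar K M N ρ hnorm), u ∈ EndBar K M N ρ hnorm → charJ K P M N ρ hnorm τ₀ I₀ u → u = LinearMap.id) ∧
    -- ... multiplicative ...
    (∀ b ∈ EndG K ρ, ∀ b' ∈ EndG K ρ,
      ∀ u : ↥(cIndBar K M N ρ hnorm) →ₗ[C] ↥(cIndBar K M N ρ hnorm), u ∈ EndBar K M N ρ hnorm → ∀ u' : ↥(cIndBar K M N ρ hnorm) →ₗ[C] ↥(cIndBar K M N ρ hnorm), u' ∈ EndBar K M N ρ hnorm → ∀ u'' : ↥(cIndBar K M N ρ hnorm) →ₗ[C] ↥(cIndBar K M N ρ hnorm), u'' ∈ EndBar K M N ρ hnorm →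
      charJ K P M N ρ hnorm τ₀ (I₀ ∘ₗ b) u → charJ K P M N ρ hnorm τ₀ (I₀ ∘ₗ b') u' →
      charJ K P M N ρ hnorm τ₀ (I₀ ∘ₗ (b ∘ₗ b')) u'' → u'' = u ∘ₗ u') ∧
    -- ... and C-linear
    (∀ b ∈ EndG K ρ, ∀ b' ∈ EndG K ρ,
      ∀ u : ↥(cIndBar K M N ρ hnorm) →ₗ[C] ↥(cIndBar K M N ρ hnorm), u ∈ EndBar K M N ρ hnorm → ∀ u' : ↥(cIndBar K M N ρ hnorm) →ₗ[C] ↥(cIndBar K M N ρ hnorm), u' ∈ EndBar K M N ρ hnorm → ∀ u'' : ↥(cIndBar K M N ρ hnorm) →ₗ[C] ↥(cIndBar K M N ρ hnorm), u'' ∈ EndBar K M N ρ hnorm →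
      charJ K P M N ρ hnorm τ₀ (I₀ ∘ₗ b) u → charJ K P M N ρ hnorm τ₀ (I₀ ∘ₗ b') u' →
      charJ K P M N ρ hnorm τ₀ (I₀ ∘ₗ (b + b')) u'' → u'' = u + u') ∧
    (∀ c : C, ∀ b ∈ EndG K ρ, ∀ u : ↥(cIndBar K M N ρ hnorm) →ₗ[C] ↥(cIndBar K M N ρ hnorm), u ∈ EndBar K M N ρ hnorm → ∀ u' : ↥(cIndBar K M N ρ hnorm) →ₗ[C] ↥(cIndBar K M N ρ hnorm), u' ∈ EndBar K M N ρ hnorm →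
      charJ K P M N ρ hnorm τ₀ (I₀ ∘ₗ b) u → charJ K P M N ρ hnorm τ₀ (I₀ ∘ₗ (c • b)) u' →
      u' = c • u) ∧
    -- the intertwining relation I₀ ∘ b = Ind_P^G(𝒮'(b)) ∘ I₀
    (∀ b ∈ EndG K ρ, ∀ u : ↥(cIndBar K M N ρ hnorm) →ₗ[C] ↥(cIndBar K M N ρ hnorm), u ∈ EndBar K M N ρ hnorm →
      charJ K P M N ρ hnorm τ₀ (I₀ ∘ₗ b) u →
      ∀ (f : ↥(cInd K ρ)) (g : G),
        (↑(I₀ (b f)) : G → ↥(cIndBar K M N ρ hnorm)) g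
          = u ((↑(I₀ f) : G → ↥(cIndBar K M N ρ hnorm)) g)) ∧
    -- (ii) j_W(Ind_P^G(α) ∘ I₀) = α
    (∀ (W : Type) [AddCommGroup W] [Module C W],
      ∀ τW : Representation C ↥P W, (∀ x : ↥P, (x : G) ∈ N → τW x = 1) →
      ∀ α ∈ HomBar K P M N hMP ρ hnorm τW,
      ∀ u ∈ HomBar K P M N hMP ρ hnorm τW,
        (∀ v : V, u (unitBar K M N ρ hnorm v)
            = α ((↑(I₀ (unitElt K ρ v)) : G → ↥(cIndBar K M N ρ hnorm)) 1)) →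
        u = α) ∧
    -- (iii) j_W(I ∘ b) = j_W(I) ∘ 𝒮'(b)
    (∀ (W : Type) [AddCommGroup W] [Module C W],
      ∀ τW : Representation C ↥P W, (∀ x : ↥P, (x : G) ∈ N → τW x = 1) →
      ∀ I ∈ HomG K P ρ τW, ∀ b ∈ EndG K ρ,
      ∀ ub : ↥(cIndBar K M N ρ hnorm) →ₗ[C] ↥(cIndBar K M N ρ hnorm), ub ∈ EndBar K M N ρ hnorm →
        charJ K P M N ρ hnorm τ₀ (I₀ ∘ₗ b) ub →
        ∀ w ∈ HomBar K P M N hMP ρ hnorm τW,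
          charJ K P M N ρ hnorm τW I w →
          ∀ w' ∈ HomBar K P M N hMP ρ hnorm τW,
            charJ K P M N ρ hnorm τW (I ∘ₗ b) w' →
            w' = w ∘ₗ ub) := by
  have hEnd : ∀ {u}, u ∈ EndBar K M N ρ hnorm → u ∈ HomBar K P M N hMP ρ hnorm τ₀ :=
    fun hu => by rwa [HomBar_eq_EndBar hMP hτ₀M]
  refine ⟨?_, ?_, ?_, ?_, ?_, ?_, ?_, ?_, ?_⟩
  · intro b hb
    obtain ⟨u, hu, hc⟩ := exists_charJ hMP hNP hτ₀N (equivHom_comp hI₀mem hb)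
    exact ⟨u, HomBar_eq_EndBar hMP hτ₀M ▸ hu, hc⟩
  · intro b _ u hu u' hu' hc hc'
    exact charJ_unique hMP (hEnd hu) (hEnd hu') hc hc'
  · intro u hu hc
    exact charJ_unique hMP (hEnd hu) (hEnd id_mem_equivHom) hc hI₀
  · intro b hb b' _ u hu u' hu' u'' hu'' hc hc' hc''
    exact charJ_unique hMP (hEnd hu'') (hEnd (equivHom_comp hu hu')) hc''
      (charJ_comp hMP hNP hPprod hG hτ₀N hτ₀M hI₀mem hI₀ hτ₀N
        (equivHom_comp hI₀mem hb) (hEnd hu) hc hc')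
  · intro b _ b' _ u hu u' hu' u'' hu'' hc hc' hc''
    refine charJ_unique hMP (hEnd hu'') (hEnd (add_mem hu hu')) hc'' ?_
    rw [LinearMap.comp_add]
    exact charJ_add hc hc'
  · intro c b _ u hu u' hu' hc hc'
    refine charJ_unique hMP (hEnd hu') (hEnd (Submodule.smul_mem _ c hu)) hc' ?_
    rw [LinearMap.comp_smul]
    exact charJ_smul c hc
  · intro b hb u hu hc
    exact apply_eq_of_charJ hMP hNP hPprod hG hτ₀N hτ₀M hI₀mem hI₀ hτ₀N
      (equivHom_comp hI₀mem hb) (hEnd hu) hc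
  · intro W _ _ τW _ α hα u hu h
    exact HomBar_ext hMP hu hα fun v => (h v).trans (congrArg α (hI₀ v).symm)
  · intro W _ _ τW hτWN I hI b _ ub hub hcub w hw hcw w' hw' hcw'
    exact charJ_unique hMP hw' (equivHom_comp hw hub) hcw'
      (charJ_comp hMP hNP hPprod hG hτ₀N hτ₀M hI₀mem hI₀ hτWN hI hw hcw hcub)

theorem statement2 {V : Type} [AddCommGroup V] [Module C V]
    (K P M N : Subgroup G)
    (hMP : M ≤ P) (hNP : N ≤ P)
    (hNnormal : ∀ p ∈ P, ∀ n' ∈ N, p * n' * p⁻¹ ∈ N)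
    (hMN : M ⊓ N = ⊥)
    (hPprod : ∀ p ∈ P, ∃ m ∈ M, ∃ n' ∈ N, p = m * n')
    (hG : ∀ g : G, ∃ k ∈ K, ∃ p ∈ P, g = k * p)
    (hKP : ∀ x ∈ K ⊓ P, ∃ m ∈ K ⊓ M, ∃ n' ∈ K ⊓ N, x = m * n')
    (hnorm : ∀ (m : ↥(K ⊓ M)) (n' : G), n' ∈ K ⊓ N → ↑m * n' * (↑m)⁻¹ ∈ K ⊓ N)
    (ρ : Representation C ↥K V)
    -- the C[P]-module structure τ₀ on W₀ = ind_{K∩M}^M V_{K∩N}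
    (τ₀ : Representation C ↥P ↥(cIndBar K M N ρ hnorm))
    (hτ₀N : ∀ x : ↥P, (x : G) ∈ N → τ₀ x = 1)
    (hτ₀M : ∀ (x : ↥P) (hx : (x : G) ∈ M),
      τ₀ x = cIndRep ((K ⊓ M).subgroupOf M) (rhoBar K M N ρ hnorm) ⟨↑x, hx⟩)
    -- I₀ = j_{W₀}⁻¹(id)
    (I₀ : ↥(cInd K ρ) →ₗ[C] ↥(fInd P τ₀))
    (hI₀mem : I₀ ∈ HomG K P ρ τ₀)
    (hI₀ : charJ K P M N ρ hnorm τ₀ I₀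
      (LinearMap.id : ↥(cIndBar K M N ρ hnorm) →ₗ[C] ↥(cIndBar K M N ρ hnorm))) :
    -- (i) 𝒮' is a well-defined map into End_{C[M]} ...
    (∀ b ∈ EndG K ρ, ∃ u : ↥(cIndBar K M N ρ hnorm) →ₗ[C] ↥(cIndBar K M N ρ hnorm), u ∈ EndBar K M N ρ hnorm ∧
      charJ K P M N ρ hnorm τ₀ (I₀ ∘ₗ b) u) ∧
    (∀ b ∈ EndG K ρ, ∀ u : ↥(cIndBar K M N ρ hnorm) →ₗ[C] ↥(cIndBar K M N ρ hnorm), u ∈ EndBar K M N ρ hnorm → ∀ u' : ↥(cIndBar K M N ρ hnorm) →ₗ[C] ↥(cIndBar K M N ρ hnorm), u' ∈ EndBar K M N ρ hnorm →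
      charJ K P M N ρ hnorm τ₀ (I₀ ∘ₗ b) u → charJ K P M N ρ hnorm τ₀ (I₀ ∘ₗ b) u' →
      u = u') ∧
    -- ... which is unital ...
    (∀ u : ↥(cIndBar K M N ρ hnorm) →ₗ[C] ↥(cIndBar K M N ρ hnorm), u ∈ EndBar K M N ρ hnorm → charJ K P M N ρ hnorm τ₀ I₀ u → u = LinearMap.id) ∧
    -- ... multiplicative ...
    (∀ b ∈ EndG K ρ, ∀ b' ∈ EndG K ρ,
      ∀ u : ↥(cIndBar K M N ρ hnorm) →ₗ[C] ↥(cIndBar K M N ρ hnorm), u ∈ EndBar K M N ρ hnorm → ∀ u' : ↥(cIndBar K M N ρ hnorm) →ₗ[C] ↥(cIndBar K M N ρ hnorm), u' ∈ EndBar K M N ρ hnorm → ∀ u'' : ↥(cIndBar K M N ρ hnorm) →ₗ[C] ↥(cIndBar K M N ρ hnorm), u'' ∈ EndBar K M N ρ hnorm →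
      charJ K P M N ρ hnorm τ₀ (I₀ ∘ₗ b) u → charJ K P M N ρ hnorm τ₀ (I₀ ∘ₗ b') u' →
      charJ K P M N ρ hnorm τ₀ (I₀ ∘ₗ (b ∘ₗ b')) u'' → u'' = u ∘ₗ u') ∧
    -- ... and C-linear
    (∀ b ∈ EndG K ρ, ∀ b' ∈ EndG K ρ,
      ∀ u : ↥(cIndBar K M N ρ hnorm) →ₗ[C] ↥(cIndBar K M N ρ hnorm), u ∈ EndBar K M N ρ hnorm → ∀ u' : ↥(cIndBar K M N ρ hnorm) →ₗ[C] ↥(cIndBar K M N ρ hnorm), u' ∈ EndBar K M N ρ hnorm → ∀ u'' : ↥(cIndBar K M N ρ hnorm) →ₗ[C] ↥(cIndBar K M N ρ hnorm), u'' ∈ EndBar K M N ρ hnorm →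
      charJ K P M N ρ hnorm τ₀ (I₀ ∘ₗ b) u → charJ K P M N ρ hnorm τ₀ (I₀ ∘ₗ b') u' →
      charJ K P M N ρ hnorm τ₀ (I₀ ∘ₗ (b + b')) u'' → u'' = u + u') ∧
    (∀ c : C, ∀ b ∈ EndG K ρ, ∀ u : ↥(cIndBar K M N ρ hnorm) →ₗ[C] ↥(cIndBar K M N ρ hnorm), u ∈ EndBar K M N ρ hnorm → ∀ u' : ↥(cIndBar K M N ρ hnorm) →ₗ[C] ↥(cIndBar K M N ρ hnorm), u' ∈ EndBar K M N ρ hnorm →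
      charJ K P M N ρ hnorm τ₀ (I₀ ∘ₗ b) u → charJ K P M N ρ hnorm τ₀ (I₀ ∘ₗ (c • b)) u' →
      u' = c • u) ∧
    -- the intertwining relation I₀ ∘ b = Ind_P^G(𝒮'(b)) ∘ I₀
    (∀ b ∈ EndG K ρ, ∀ u : ↥(cIndBar K M N ρ hnorm) →ₗ[C] ↥(cIndBar K M N ρ hnorm), u ∈ EndBar K M N ρ hnorm →
      charJ K P M N ρ hnorm τ₀ (I₀ ∘ₗ b) u →
      ∀ (f : ↥(cInd K ρ)) (g : G),
        (↑(I₀ (b f)) : G → ↥(cIndBar K M N ρ hnorm)) g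
          = u ((↑(I₀ f) : G → ↥(cIndBar K M N ρ hnorm)) g)) ∧
    -- (ii) j_W(Ind_P^G(α) ∘ I₀) = α
    (∀ (W : Type) [AddCommGroup W] [Module C W],
      ∀ τW : Representation C ↥P W, (∀ x : ↥P, (x : G) ∈ N → τW x = 1) →
      ∀ α ∈ HomBar K P M N hMP ρ hnorm τW,
      ∀ u ∈ HomBar K P M N hMP ρ hnorm τW,
        (∀ v : V, u (unitBar K M N ρ hnorm v)
            = α ((↑(I₀ (unitElt K ρ v)) : G → ↥(cIndBar K M N ρ hnorm)) 1)) →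
        u = α) ∧
    -- (iii) j_W(I ∘ b) = j_W(I) ∘ 𝒮'(b)
    (∀ (W : Type) [AddCommGroup W] [Module C W],
      ∀ τW : Representation C ↥P W, (∀ x : ↥P, (x : G) ∈ N → τW x = 1) →
      ∀ I ∈ HomG K P ρ τW, ∀ b ∈ EndG K ρ,
      ∀ ub : ↥(cIndBar K M N ρ hnorm) →ₗ[C] ↥(cIndBar K M N ρ hnorm), ub ∈ EndBar K M N ρ hnorm →
        charJ K P M N ρ hnorm τ₀ (I₀ ∘ₗ b) ub →
        ∀ w ∈ HomBar K P M N hMP ρ hnorm τW,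
          charJ K P M N ρ hnorm τW I w →
          ∀ w' ∈ HomBar K P M N hMP ρ hnorm τW,
            charJ K P M N ρ hnorm τW (I ∘ₗ b) w' →
            w' = w ∘ₗ ub) :=
  statement2_general K P M N hMP hNP hPprod hG hnorm ρ τ₀ hτ₀N hτ₀M I₀ hI₀mem hI₀

end Paper
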